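/- arXiv:0710.1351 — 7 statements merged into one kernel-verified Lean document; each statement's English description precedes it below -/
import Mathlib

section
/- Let Λ ∈ ℝ, let D ⊆ ℝ² be open, and let r, U, A, Ω : D → ℝ be C² functions with r > 0 satisfying ∂ᵤ∂ᵥU = −(1/(2r))(∂ᵥr·∂ᵤU + ∂ᵤr·∂ᵥU) + (e^{4U}/(2r²))∂ᵤA·∂ᵥA + (Λ/4)Ω² and ∂ᵤ∂ᵥA = −2(∂ᵥA·∂ᵤU + ∂ᵤA·∂ᵥU) + (1/(2r))(∂ᵤA·∂ᵥr + ∂ᵥA·∂ᵤr) on D. Define G = r((∂ᵥU)² + (∂ᵤU)²) + (e^{4U}/(4r))((∂ᵥA)² + (∂ᵤA)²) and H = r((∂ᵥU)² − (∂ᵤU)²) + (e^{4U}/(4r))((∂ᵥA)² − (∂ᵤA)²). Then on D one has the identities ∂ᵤ(G + H) = −2∂ᵥr·∂ᵤU·∂ᵥU + ∂ᵥr·(e^{4U}/(2r²))∂ᵤA·∂ᵥA + r·∂ᵥU·Λ·Ω² and ∂ᵥ(G − H) = −2∂ᵤr·∂ᵤU·∂ᵥU + ∂ᵤr·(e^{4U}/(2r²))∂ᵤA·∂ᵥA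 + r·∂ᵤU·Λ·Ω². -/
open Real Set

/-- The null partial derivative in the `u` direction. -/
noncomputable def pdu (f : ℝ × ℝ → ℝ) (p : ℝ × ℝ) : ℝ := fderiv ℝ f p (1, 0)

/-- The null partial derivative in the `v` direction. -/
noncomputable def pdv (f : ℝ × ℝ → ℝ) (p : ℝ × ℝ) : ℝ := fderiv ℝ f p (0, 1)

/-- The energy density `G` of the wave-map part of the system. -/
noncomputable def energyG (r U A : ℝ × ℝ → ℝ) (p : ℝ × ℝ) : ℝ :=
  r p * ((pdv U p) ^ 2 + (pdu U p) ^ 2)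
    + Real.exp (4 * U p) / (4 * r p) * ((pdv A p) ^ 2 + (pdu A p) ^ 2)

/-- The momentum density `H` of the wave-map part of the system. -/
noncomputable def energyH (r U A : ℝ × ℝ → ℝ) (p : ℝ × ℝ) : ℝ :=
  r p * ((pdv U p) ^ 2 - (pdu U p) ^ 2)
    + Real.exp (4 * U p) / (4 * r p) * ((pdv A p) ^ 2 - (pdu A p) ^ 2)


lemma hasDerivAt_line (p a : ℝ × ℝ) : HasDerivAt (fun t : ℝ => p + t • a) a 0 := by
  simpa using ((hasDerivAt_id (0:ℝ)).smul_const a).const_add p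

lemma hasDerivAt_dir {f : ℝ × ℝ → ℝ} {p : ℝ × ℝ} (hf : DifferentiableAt ℝ f p) (a : ℝ × ℝ) :
    HasDerivAt (fun t : ℝ => f (p + t • a)) (fderiv ℝ f p a) 0 :=
  hf.hasFDerivAt.comp_hasDerivAt_of_eq 0 (hasDerivAt_line p a) (by simp)

lemma hasFDerivAt_pd {f : ℝ × ℝ → ℝ} {p : ℝ × ℝ} (hf : ContDiffAt ℝ 2 f p) (b : ℝ × ℝ) :
    HasFDerivAt (fun q => fderiv ℝ f q b)
      ((ContinuousLinearMap.apply ℝ ℝ b).comp (fderiv ℝ (fderiv ℝ f) p)) p := by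
  have hd : DifferentiableAt ℝ (fderiv ℝ f) p :=
    (hf.fderiv_right (m := 1) (by norm_num)).differentiableAt (by norm_num)
  exact (ContinuousLinearMap.apply ℝ ℝ b).hasFDerivAt.comp p hd.hasFDerivAt

lemma apply_fderiv {f : ℝ × ℝ → ℝ} {p : ℝ × ℝ} (hf : ContDiffAt ℝ 2 f p) (a b : ℝ × ℝ) :
    fderiv ℝ (fun q => fderiv ℝ f q b) p a = fderiv ℝ (fderiv ℝ f) p a b := by
  rw [(hasFDerivAt_pd hf b).fderiv]; rfl

lemma clairaut {f : ℝ × ℝ → ℝ} {p : ℝ × ℝ} (hf : ContDiffAt ℝ 2 f p) (a b : ℝ × ℝ) :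
    fderiv ℝ (fun q => fderiv ℝ f q b) p a = fderiv ℝ (fun q => fderiv ℝ f q a) p b := by
  rw [apply_fderiv hf a b, apply_fderiv hf b a]
  exact hf.isSymmSndFDerivAt (by simp [minSmoothness_of_isRCLikeNormedField]) a b

lemma key (r U A : ℝ × ℝ → ℝ) (p a b : ℝ × ℝ) (Λ W : ℝ)
    (hr2 : ContDiffAt ℝ 2 r p) (hU2 : ContDiffAt ℝ 2 U p) (hA2 : ContDiffAt ℝ 2 A p)
    (hrpos : 0 < r p)
    (hMU : fderiv ℝ (fun q => fderiv ℝ U q b) p a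
      = -(1 / (2 * r p)) * (fderiv ℝ r p b * fderiv ℝ U p a + fderiv ℝ r p a * fderiv ℝ U p b)
        + Real.exp (4 * U p) / (2 * (r p) ^ 2) * (fderiv ℝ A p a * fderiv ℝ A p b)
        + Λ / 4 * W)
    (hMA : fderiv ℝ (fun q => fderiv ℝ A q b) p a
      = -2 * (fderiv ℝ A p b * fderiv ℝ U p a + fderiv ℝ A p a * fderiv ℝ U p b)
        + 1 / (2 * r p) * (fderiv ℝ A p a * fderiv ℝ r p b + fderiv ℝ A p b * fderiv ℝ r p a)) :
    fderiv ℝ (fun q => 2 * r q * (fderiv ℝ U q b) ^ 2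
        + Real.exp (4 * U q) * (fderiv ℝ A q b) ^ 2 / (2 * r q)) p a
      = -2 * fderiv ℝ r p b * fderiv ℝ U p a * fderiv ℝ U p b
        + fderiv ℝ r p b * (Real.exp (4 * U p) / (2 * (r p) ^ 2)) * (fderiv ℝ A p a * fderiv ℝ A p b)
        + r p * fderiv ℝ U p b * Λ * W := by
  have hrd : DifferentiableAt ℝ r p := hr2.differentiableAt (by norm_num)
  have hUd : DifferentiableAt ℝ U p := hU2.differentiableAt (by norm_num)
  have hgUd : DifferentiableAt ℝ (fun q => fderiv ℝ U q b) p :=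
    (hasFDerivAt_pd hU2 b).differentiableAt
  have hgAd : DifferentiableAt ℝ (fun q => fderiv ℝ A q b) p :=
    (hasFDerivAt_pd hA2 b).differentiableAt
  have hne : 2 * r p ≠ 0 := by positivity
  have hFd : DifferentiableAt ℝ (fun q => 2 * r q * (fderiv ℝ U q b) ^ 2
      + Real.exp (4 * U q) * (fderiv ℝ A q b) ^ 2 / (2 * r q)) p :=
    by
    have hden : DifferentiableAt ℝ (fun q => 2 * r q) p := hrd.const_mul 2
    have hnum : DifferentiableAt ℝ (fun q => Real.exp (4 * U q) * (fderiv ℝ A q b) ^ 2) p :=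
      ((hUd.const_mul 4).exp).mul (hgAd.pow 2)
    have h2 : DifferentiableAt ℝ (fun q => Real.exp (4 * U q) * (fderiv ℝ A q b) ^ 2 / (2 * r q)) p := by
      simpa only [← div_eq_mul_inv, Pi.mul_def, Pi.inv_def] using hnum.mul (hden.inv hne)
    exact ((hrd.const_mul 2).mul (hgUd.pow 2)).add h2
  -- line derivatives
  have hrl := hasDerivAt_dir hrd a
  have hUl := hasDerivAt_dir hUd a
  have hgUl := hasDerivAt_dir hgUd a
  have hgAl := hasDerivAt_dir hgAd a
  have hne' : 2 * r (p + (0:ℝ) • a) ≠ 0 := by simpa using hne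
  have hbig := ((hrl.const_mul 2).mul (hgUl.pow 2)).add
      ((((hUl.const_mul 4).exp).mul (hgAl.pow 2)).div (hrl.const_mul 2) hne')
  have hdir := hasDerivAt_dir hFd a
  have heq := hdir.unique hbig
  simp only [zero_smul, add_zero, Pi.pow_apply, Pi.mul_apply] at heq
  rw [heq, hMU, hMA]
  have hE : Real.exp (4 * U p) ≠ 0 := (Real.exp_pos _).ne'
  have hr0 : r p ≠ 0 := hrpos.ne'
  field_simp
  ring

theorem energy_identities
    (Λ : ℝ) (D : Set (ℝ × ℝ)) (hD : IsOpen D)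
    (r U A Ω : ℝ × ℝ → ℝ)
    (hrC2 : ContDiffOn ℝ 2 r D) (hUC2 : ContDiffOn ℝ 2 U D)
    (hAC2 : ContDiffOn ℝ 2 A D) (hΩC2 : ContDiffOn ℝ 2 Ω D)
    (hrpos : ∀ p ∈ D, 0 < r p)
    (heqU : ∀ p ∈ D, pdu (pdv U) p
      = -(1 / (2 * r p)) * (pdv r p * pdu U p + pdu r p * pdv U p)
        + Real.exp (4 * U p) / (2 * (r p) ^ 2) * (pdu A p * pdv A p)
        + Λ / 4 * (Ω p) ^ 2)
    (heqA : ∀ p ∈ D, pdu (pdv A) p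
      = -2 * (pdv A p * pdu U p + pdu A p * pdv U p)
        + 1 / (2 * r p) * (pdu A p * pdv r p + pdv A p * pdu r p)) :
    ∀ p ∈ D,
      pdu (fun q => energyG r U A q + energyH r U A q) p
        = -2 * pdv r p * pdu U p * pdv U p
          + pdv r p * (Real.exp (4 * U p) / (2 * (r p) ^ 2)) * (pdu A p * pdv A p)
          + r p * pdv U p * Λ * (Ω p) ^ 2 ∧
      pdv (fun q => energyG r U A q - energyH r U A q) p
        = -2 * pdu r p * pdu U p * pdv U p
          + pdu r p * (Real.exp (4 * U p) / (2 * (r p) ^ 2)) * (pdu A p * pdv A p)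
          + r p * pdu U p * Λ * (Ω p) ^ 2 := by
  intro p hp
  have hr2 : ContDiffAt ℝ 2 r p := hrC2.contDiffAt (hD.mem_nhds hp)
  have hU2 : ContDiffAt ℝ 2 U p := hUC2.contDiffAt (hD.mem_nhds hp)
  have hA2 : ContDiffAt ℝ 2 A p := hAC2.contDiffAt (hD.mem_nhds hp)
  have hrp := hrpos p hp
  have hU := heqU p hp
  have hA := heqA p hp
  simp only [pdu, pdv] at hU hA ⊢
  constructor
  · have e1 : (fun q => energyG r U A q + energyH r U A q)
        = fun q => 2 * r q * (fderiv ℝ U q (0,1)) ^ 2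
            + Real.exp (4 * U q) * (fderiv ℝ A q (0,1)) ^ 2 / (2 * r q) := by
      funext q; simp only [energyG, energyH, pdu, pdv]; ring
    rw [e1]
    exact key r U A p (1,0) (0,1) Λ ((Ω p)^2) hr2 hU2 hA2 hrp hU hA
  · have e2 : (fun q => energyG r U A q - energyH r U A q)
        = fun q => 2 * r q * (fderiv ℝ U q (1,0)) ^ 2
            + Real.exp (4 * U q) * (fderiv ℝ A q (1,0)) ^ 2 / (2 * r q) := by
      funext q; simp only [energyG, energyH, pdu, pdv]; ring
    rw [e2]
    have hMU : fderiv ℝ (fun q => fderiv ℝ U q (1,0)) p (0,1)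
        = -(1 / (2 * r p)) * (fderiv ℝ r p (1,0) * fderiv ℝ U p (0,1)
            + fderiv ℝ r p (0,1) * fderiv ℝ U p (1,0))
          + Real.exp (4 * U p) / (2 * (r p) ^ 2) * (fderiv ℝ A p (0,1) * fderiv ℝ A p (1,0))
          + Λ / 4 * ((Ω p)^2) := by
      rw [clairaut hU2 (0,1) (1,0), show (fun q => fderiv ℝ U q (0,1)) = pdv U from rfl, hU]; ring
    have hMA : fderiv ℝ (fun q => fderiv ℝ A q (1,0)) p (0,1)
        = -2 * (fderiv ℝ A p (1,0) * fderiv ℝ U p (0,1)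
            + fderiv ℝ A p (0,1) * fderiv ℝ U p (1,0))
          + 1 / (2 * r p) * (fderiv ℝ A p (0,1) * fderiv ℝ r p (1,0)
            + fderiv ℝ A p (1,0) * fderiv ℝ r p (0,1)) := by
      rw [clairaut hA2 (0,1) (1,0), show (fun q => fderiv ℝ A q (0,1)) = pdv A from rfl, hA]; ring
    have hk := key r U A p (0,1) (1,0) Λ ((Ω p)^2) hr2 hU2 hA2 hrp hMU hMA
    rw [hk]; ring
end

section
/- Let U₀ < u₁ and V < v₁ be real numbers, let R = [U₀, u₁] × [V, v₁], let a, b : R → ℝ be continuous, let c ∈ ℝ, and let A : R → ℝ be a C² function satisfying ∂ᵤ∂ᵥA = a·∂ᵤA + b·∂ᵥA on R, together with the characteristic boundary conditions A(U₀, v) = c for all v ∈ [V, v₁] and A(u, V) = c for all u ∈ [U₀, u₁]. Then A(u, v) = c for all (u, v) ∈ R. -/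
open Real Set

open MeasureTheory intervalIntegral Nat Filter

private lemma goursat_slice_v (f : ℝ × ℝ → ℝ) (hf : Differentiable ℝ f) (u v : ℝ) :
    HasDerivAt (fun s => f (u, s)) (fderiv ℝ f (u, v) (0, 1)) v := by
  have h1 : HasDerivAt (fun s : ℝ => ((u, s) : ℝ × ℝ)) ((0 : ℝ), (1 : ℝ)) v :=
    (hasDerivAt_const v u).prodMk (hasDerivAt_id v)
  exact (hf (u, v)).hasFDerivAt.comp_hasDerivAt v h1

private lemma goursat_slice_u (f : ℝ × ℝ → ℝ) (hf : Differentiable ℝ f) (u v : ℝ) :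
    HasDerivAt (fun s => f (s, v)) (fderiv ℝ f (u, v) (1, 0)) u := by
  have h1 : HasDerivAt (fun s : ℝ => ((s, v) : ℝ × ℝ)) ((1 : ℝ), (0 : ℝ)) u :=
    (hasDerivAt_id u).prodMk (hasDerivAt_const u v)
  exact (hf (u, v)).hasFDerivAt.comp_hasDerivAt u h1

private lemma goursat_integral_shift_pow (n : ℕ) (α x y : ℝ) (hα : 0 ≤ α) :
    (∫ s in x..y, (α + (s - x)) ^ n) ≤ (α + (y - x)) ^ (n + 1) / (n + 1) := by
  have h : (fun s : ℝ => (α + (s - x)) ^ n) = fun s : ℝ => (s + (α - x)) ^ n := by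
    funext s; ring_nf
  rw [h, integral_comp_add_right (fun t => t ^ n) (α - x), integral_pow]
  have h1 : x + (α - x) = α := by ring
  have h2 : y + (α - x) = α + (y - x) := by ring
  rw [h1, h2]
  have h3 : (0:ℝ) ≤ α ^ (n + 1) := pow_nonneg hα _
  have hn : (0:ℝ) < (n : ℝ) + 1 := by positivity
  exact div_le_div_of_nonneg_right (by linarith) hn.le

set_option maxHeartbeats 1000000 in
theorem goursat_uniqueness
    (U₀ u₁ V v₁ : ℝ) (hu : U₀ < u₁) (hv : V < v₁) (c : ℝ)
    (a b A : ℝ × ℝ → ℝ)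
    (ha : ContinuousOn a (Icc U₀ u₁ ×ˢ Icc V v₁))
    (hb : ContinuousOn b (Icc U₀ u₁ ×ˢ Icc V v₁))
    (hAC2 : ContDiff ℝ 2 A)
    (heq : ∀ p ∈ Icc U₀ u₁ ×ˢ Icc V v₁,
      pdu (pdv A) p = a p * pdu A p + b p * pdv A p)
    (hbc₁ : ∀ v ∈ Icc V v₁, A (U₀, v) = c)
    (hbc₂ : ∀ u ∈ Icc U₀ u₁, A (u, V) = c) :
    ∀ p ∈ Icc U₀ u₁ ×ˢ Icc V v₁, A p = c := by
  have hA1 : Differentiable ℝ A := hAC2.differentiable (by norm_num)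
  have hfd1 : ContDiff ℝ 1 (fderiv ℝ A) := hAC2.fderiv_right (by norm_num)
  have hP1 : ContDiff ℝ 1 (pdu A) := hfd1.clm_apply contDiff_const
  have hQ1 : ContDiff ℝ 1 (pdv A) := hfd1.clm_apply contDiff_const
  have hPd : Differentiable ℝ (pdu A) := hP1.differentiable (by norm_num)
  have hQd : Differentiable ℝ (pdv A) := hQ1.differentiable (by norm_num)
  -- second derivative manipulation
  have hclm : ∀ (w q z : ℝ × ℝ), fderiv ℝ (fun q' => fderiv ℝ A q' w) q z
      = fderiv ℝ (fderiv ℝ A) q z w := by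
    intro w q z
    rw [fderiv_clm_apply (hfd1.differentiable (by norm_num) q) (differentiableAt_const w)]
    simp
  have hsymm : ∀ (q z w : ℝ × ℝ), fderiv ℝ (fderiv ℝ A) q z w = fderiv ℝ (fderiv ℝ A) q w z :=
    fun q => hAC2.contDiffAt.isSymmSndFDerivAt (by norm_num)
  have hPv : ∀ q : ℝ × ℝ, fderiv ℝ (pdu A) q (0, 1) = pdu (pdv A) q := by
    intro q
    have e1 : fderiv ℝ (pdu A) q (0, 1) = fderiv ℝ (fderiv ℝ A) q (0, 1) (1, 0) :=
      hclm (1, 0) q (0, 1)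
    have e2 : pdu (pdv A) q = fderiv ℝ (fderiv ℝ A) q (1, 0) (0, 1) :=
      hclm (0, 1) q (1, 0)
    rw [e1, e2, hsymm]
  have hQu : ∀ q : ℝ × ℝ, fderiv ℝ (pdv A) q (1, 0) = pdu (pdv A) q := fun _ => rfl
  -- boundary values of the partial derivatives vanish
  have hQ0 : ∀ v' ∈ Icc V v₁, pdv A (U₀, v') = 0 := by
    have hIoo : EqOn (fun v' => pdv A (U₀, v')) (fun _ => (0:ℝ)) (Ioo V v₁) := by
      intro v' hv'
      have hd : HasDerivAt (fun s => A (U₀, s)) (pdv A (U₀, v')) v' :=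
        goursat_slice_v A hA1 U₀ v'
      have hev : (fun s => A (U₀, s)) =ᶠ[nhds v'] fun _ => c := by
        filter_upwards [Ioo_mem_nhds hv'.1 hv'.2] with s hs
        exact hbc₁ s (Ioo_subset_Icc_self hs)
      have hconst : HasDerivAt (fun s => A (U₀, s)) 0 v' :=
        (hasDerivAt_const v' c).congr_of_eventuallyEq hev
      exact hd.unique hconst
    have hcont : Continuous fun v' => pdv A (U₀, v') :=
      hQ1.continuous.comp (continuous_const.prodMk continuous_id)
    have := hIoo.closure hcont continuous_const
    rw [closure_Ioo hv.ne] at this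
    exact fun v' hv' => this hv'
  have hP0 : ∀ u' ∈ Icc U₀ u₁, pdu A (u', V) = 0 := by
    have hIoo : EqOn (fun u' => pdu A (u', V)) (fun _ => (0:ℝ)) (Ioo U₀ u₁) := by
      intro u' hu'
      have hd : HasDerivAt (fun s => A (s, V)) (pdu A (u', V)) u' :=
        goursat_slice_u A hA1 u' V
      have hev : (fun s => A (s, V)) =ᶠ[nhds u'] fun _ => c := by
        filter_upwards [Ioo_mem_nhds hu'.1 hu'.2] with s hs
        exact hbc₂ s (Ioo_subset_Icc_self hs)
      have hconst : HasDerivAt (fun s => A (s, V)) 0 u' :=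
        (hasDerivAt_const u' c).congr_of_eventuallyEq hev
      exact hd.unique hconst
    have hcont : Continuous fun u' => pdu A (u', V) :=
      hP1.continuous.comp (continuous_id.prodMk continuous_const)
    have := hIoo.closure hcont continuous_const
    rw [closure_Ioo hu.ne] at this
    exact fun u' hu' => this hu'
  -- bounds on the compact rectangle
  have hRcomp : IsCompact (Icc U₀ u₁ ×ˢ Icc V v₁) := isCompact_Icc.prod isCompact_Icc
  have hp0 : ((U₀, V) : ℝ × ℝ) ∈ Icc U₀ u₁ ×ˢ Icc V v₁ :=
    ⟨⟨le_rfl, hu.le⟩, ⟨le_rfl, hv.le⟩⟩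
  obtain ⟨Ka, hKa⟩ := hRcomp.exists_bound_of_continuousOn ha
  obtain ⟨Kb, hKb⟩ := hRcomp.exists_bound_of_continuousOn hb
  obtain ⟨Mp, hMp⟩ := hRcomp.exists_bound_of_continuousOn hP1.continuous.continuousOn
  obtain ⟨Mq, hMq⟩ := hRcomp.exists_bound_of_continuousOn hQ1.continuous.continuousOn
  set K : ℝ := max Ka Kb with hKdef
  set M : ℝ := max Mp Mq with hMdef
  have hK0 : 0 ≤ K := le_trans (norm_nonneg (a (U₀, V))) ((hKa _ hp0).trans (le_max_left _ _))
  have hM0 : 0 ≤ M := le_trans (norm_nonneg (pdu A (U₀, V)))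
    ((hMp _ hp0).trans (le_max_left _ _))
  have haK : ∀ q ∈ Icc U₀ u₁ ×ˢ Icc V v₁, |a q| ≤ K :=
    fun q hq => (hKa q hq).trans (le_max_left _ _)
  have hbK : ∀ q ∈ Icc U₀ u₁ ×ˢ Icc V v₁, |b q| ≤ K :=
    fun q hq => (hKb q hq).trans (le_max_right _ _)
  -- main Gronwall-type induction
  have key : ∀ n : ℕ, ∀ q ∈ Icc U₀ u₁ ×ˢ Icc V v₁,
      |pdu A q| ≤ M * (2*K)^n * ((q.1 - U₀) + (q.2 - V))^n / n ! ∧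
      |pdv A q| ≤ M * (2*K)^n * ((q.1 - U₀) + (q.2 - V))^n / n ! := by
    intro n
    induction n with
    | zero =>
      intro q hq
      simp only [pow_zero, mul_one, Nat.factorial_zero, Nat.cast_one, div_one]
      exact ⟨(hMp q hq).trans (le_max_left _ _), (hMq q hq).trans (le_max_right _ _)⟩
    | succ n ih =>
      -- pointwise bound on the source term
      have hsrc : ∀ q' ∈ Icc U₀ u₁ ×ˢ Icc V v₁,
          |a q' * pdu A q' + b q' * pdv A q'|
            ≤ M * (2*K)^(n+1) * ((q'.1 - U₀) + (q'.2 - V))^n / n ! := by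
        intro q' hq'
        obtain ⟨h1, h2⟩ := ih q' hq'
        calc |a q' * pdu A q' + b q' * pdv A q'|
            ≤ |a q'| * |pdu A q'| + |b q'| * |pdv A q'| := by
              refine (abs_add_le _ _).trans ?_
              rw [abs_mul, abs_mul]
          _ ≤ K * |pdu A q'| + K * |pdv A q'| :=
              add_le_add (mul_le_mul_of_nonneg_right (haK q' hq') (abs_nonneg _))
                (mul_le_mul_of_nonneg_right (hbK q' hq') (abs_nonneg _))
          _ ≤ K * (M * (2*K)^n * ((q'.1 - U₀) + (q'.2 - V))^n / n !)
              + K * (M * (2*K)^n * ((q'.1 - U₀) + (q'.2 - V))^n / n !) :=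
              add_le_add (mul_le_mul_of_nonneg_left h1 hK0)
                (mul_le_mul_of_nonneg_left h2 hK0)
          _ = M * (2*K)^(n+1) * ((q'.1 - U₀) + (q'.2 - V))^n / n ! := by
              rw [pow_succ]; ring
      intro q hq
      obtain ⟨u, v⟩ := q
      have hqu : u ∈ Icc U₀ u₁ := hq.1
      have hqv : v ∈ Icc V v₁ := hq.2
      have huw : 0 ≤ u - U₀ := by linarith [hqu.1]
      have hvw : 0 ≤ v - V := by linarith [hqv.1]
      have hfac : (0:ℝ) < n ! := by exact_mod_cast Nat.factorial_pos n
      constructor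
      · -- bound on pdu A, integrating in the v direction from V
        set F : ℝ → ℝ := fun s => fderiv ℝ (pdu A) (u, s) (0, 1) with hFdef
        have hFder : ∀ s, HasDerivAt (fun s' => pdu A (u, s')) (F s) s :=
          fun s => goursat_slice_v (pdu A) hPd u s
        have hFcont : Continuous F := by
          have h1 : Continuous (fderiv ℝ (pdu A)) := hP1.continuous_fderiv (by norm_num)
          exact (h1.comp (continuous_const.prodMk continuous_id)).clm_apply continuous_const
        have hFeq : ∀ s ∈ Icc V v, F s = a (u, s) * pdu A (u, s) + b (u, s) * pdv A (u, s) := by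
          intro s hs
          have hmem : ((u, s) : ℝ × ℝ) ∈ Icc U₀ u₁ ×ˢ Icc V v₁ :=
            ⟨hqu, ⟨hs.1, hs.2.trans hqv.2⟩⟩
          rw [hFdef]
          simp only
          rw [hPv (u, s)]
          exact heq _ hmem
        have hint : pdu A (u, v) = ∫ s in V..v, F s := by
          have h := intervalIntegral.integral_eq_sub_of_hasDerivAt
            (f := fun s' => pdu A (u, s')) (f' := F) (fun s _ => hFder s)
            (hFcont.intervalIntegrable V v)
          rw [h]
          simp only [hP0 u hqu, sub_zero]
        rw [hint, ← Real.norm_eq_abs]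
        calc ‖∫ s in V..v, F s‖ ≤ ∫ s in V..v, ‖F s‖ :=
              intervalIntegral.norm_integral_le_integral_norm hqv.1
          _ ≤ ∫ s in V..v, M * (2*K)^(n+1) / n ! * ((u - U₀) + (s - V))^n := by
              refine intervalIntegral.integral_mono_on hqv.1
                (hFcont.norm.intervalIntegrable V v) ?_ ?_
              · exact (continuous_const.mul ((continuous_const.add
                  (continuous_id.sub continuous_const)).pow n)).intervalIntegrable _ _
              · intro s hs
                rw [Real.norm_eq_abs, hFeq s hs]
                calc |a (u, s) * pdu A (u, s) + b (u, s) * pdv A (u, s)|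
                    ≤ M * (2*K)^(n+1) * ((u - U₀) + (s - V))^n / n ! :=
                      hsrc (u, s) ⟨hqu, ⟨hs.1, hs.2.trans hqv.2⟩⟩
                  _ = M * (2*K)^(n+1) / n ! * ((u - U₀) + (s - V))^n := by ring
          _ = M * (2*K)^(n+1) / n ! * ∫ s in V..v, ((u - U₀) + (s - V))^n := by
              rw [← intervalIntegral.integral_const_mul]
          _ ≤ M * (2*K)^(n+1) / n ! * (((u - U₀) + (v - V))^(n+1) / (n+1)) := by
              refine mul_le_mul_of_nonneg_left (goursat_integral_shift_pow n _ V v huw)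
                (by positivity)
          _ = M * (2*K)^(n+1) * ((u - U₀) + (v - V))^(n+1) / (n+1)! := by
              rw [Nat.factorial_succ]
              push_cast
              rw [_root_.div_mul_div_comm]
              ring
      · -- bound on pdv A, integrating in the u direction from U₀
        set F : ℝ → ℝ := fun s => fderiv ℝ (pdv A) (s, v) (1, 0) with hFdef
        have hFder : ∀ s, HasDerivAt (fun s' => pdv A (s', v)) (F s) s :=
          fun s => goursat_slice_u (pdv A) hQd s v
        have hFcont : Continuous F := by
          have h1 : Continuous (fderiv ℝ (pdv A)) := hQ1.continuous_fderiv (by norm_num)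
          exact (h1.comp (continuous_id.prodMk continuous_const)).clm_apply continuous_const
        have hFeq : ∀ s ∈ Icc U₀ u, F s = a (s, v) * pdu A (s, v) + b (s, v) * pdv A (s, v) := by
          intro s hs
          have hmem : ((s, v) : ℝ × ℝ) ∈ Icc U₀ u₁ ×ˢ Icc V v₁ :=
            ⟨⟨hs.1, hs.2.trans hqu.2⟩, hqv⟩
          rw [hFdef]
          simp only
          rw [hQu (s, v)]
          exact heq _ hmem
        have hint : pdv A (u, v) = ∫ s in U₀..u, F s := by
          have h := intervalIntegral.integral_eq_sub_of_hasDerivAt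
            (f := fun s' => pdv A (s', v)) (f' := F) (fun s _ => hFder s)
            (hFcont.intervalIntegrable U₀ u)
          rw [h]
          simp only [hQ0 v hqv, sub_zero]
        rw [hint, ← Real.norm_eq_abs]
        calc ‖∫ s in U₀..u, F s‖ ≤ ∫ s in U₀..u, ‖F s‖ :=
              intervalIntegral.norm_integral_le_integral_norm hqu.1
          _ ≤ ∫ s in U₀..u, M * (2*K)^(n+1) / n ! * ((v - V) + (s - U₀))^n := by
              refine intervalIntegral.integral_mono_on hqu.1
                (hFcont.norm.intervalIntegrable U₀ u) ?_ ?_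
              · exact (continuous_const.mul ((continuous_const.add
                  (continuous_id.sub continuous_const)).pow n)).intervalIntegrable _ _
              · intro s hs
                rw [Real.norm_eq_abs, hFeq s hs]
                calc |a (s, v) * pdu A (s, v) + b (s, v) * pdv A (s, v)|
                    ≤ M * (2*K)^(n+1) * ((s - U₀) + (v - V))^n / n ! :=
                      hsrc (s, v) ⟨⟨hs.1, hs.2.trans hqu.2⟩, hqv⟩
                  _ = M * (2*K)^(n+1) / n ! * ((v - V) + (s - U₀))^n := by ring_nf
          _ = M * (2*K)^(n+1) / n ! * ∫ s in U₀..u, ((v - V) + (s - U₀))^n := by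
              rw [← intervalIntegral.integral_const_mul]
          _ ≤ M * (2*K)^(n+1) / n ! * (((v - V) + (u - U₀))^(n+1) / (n+1)) := by
              refine mul_le_mul_of_nonneg_left (goursat_integral_shift_pow n _ U₀ u hvw)
                (by positivity)
          _ = M * (2*K)^(n+1) * ((u - U₀) + (v - V))^(n+1) / (n+1)! := by
              rw [Nat.factorial_succ]
              push_cast
              rw [_root_.div_mul_div_comm]
              ring
  -- the factorial bound forces pdv A to vanish on the rectangle
  have hQzero : ∀ q ∈ Icc U₀ u₁ ×ˢ Icc V v₁, pdv A q = 0 := by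
    intro q hq
    set w : ℝ := (q.1 - U₀) + (q.2 - V) with hwdef
    have hbnd : ∀ n : ℕ, |pdv A q| ≤ M * (2*K*w)^n / n ! := by
      intro n
      have h2 := (key n q hq).2
      calc |pdv A q| ≤ M * (2*K)^n * w^n / n ! := h2
        _ = M * (2*K*w)^n / n ! := by
            rw [show (2*K*w)^n = (2*K)^n * w^n from mul_pow _ _ _]; ring
    have hlim : Tendsto (fun n : ℕ => M * (2*K*w)^n / n !) atTop (nhds 0) := by
      have h1 := (FloorSemiring.tendsto_pow_div_factorial_atTop (K := ℝ) (2*K*w)).const_mul M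
      simpa [mul_div_assoc] using h1
    have hle : |pdv A q| ≤ 0 := ge_of_tendsto hlim (Filter.Eventually.of_forall hbnd)
    exact abs_eq_zero.mp (le_antisymm hle (abs_nonneg _))
  -- integrate pdv A in the v direction to conclude
  intro q hq
  obtain ⟨u, v⟩ := q
  have hqu : u ∈ Icc U₀ u₁ := hq.1
  have hqv : v ∈ Icc V v₁ := hq.2
  have hder : ∀ s, HasDerivAt (fun s' => A (u, s')) (pdv A (u, s)) s :=
    fun s => goursat_slice_v A hA1 u s
  have hQc : Continuous fun s => pdv A (u, s) :=
    hQ1.continuous.comp (continuous_const.prodMk continuous_id)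
  have h := intervalIntegral.integral_eq_sub_of_hasDerivAt
    (f := fun s' => A (u, s')) (f' := fun s => pdv A (u, s)) (fun s _ => hder s)
    (hQc.intervalIntegrable V v)
  have hzero : (∫ s in V..v, pdv A (u, s)) = 0 := by
    rw [intervalIntegral.integral_congr (g := fun _ => (0:ℝ)) ?_, intervalIntegral.integral_zero]
    intro s hs
    rw [uIcc_of_le hqv.1] at hs
    exact hQzero (u, s) ⟨hqu, ⟨hs.1, hs.2.trans hqv.2⟩⟩
  rw [hzero] at h
  simp only [hbc₂ u hqu] at h
  linarith
end

section
/- Let Λ > 0, r₀ > 0, let u₁ ∈ ℝ, U₀ ∈ [−∞, u₁), let J ⊆ ℝ be an interval, and let r, Ω : (U₀, u₁] × J → ℝ be C² functions with r ≥ r₀, ∂ᵥr ≥ 0, and 2∂ᵤ∂ᵥr ≥ ΛΩ²r everywhere. Then for every v ∈ J and every u ∈ (U₀, u₁], ∫ᵤ^{u₁} Ω²(u′, v) du′ ≤ 2∂ᵥr(u₁, v)/(Λ r₀). In particular, for every v ∈ J the integral of Ω²(·, v) over the whole interval (U₀, u₁] is finite. -/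
open Real Set MeasureTheory

theorem affine_length_bound
    (Λ r₀ u₁ : ℝ) (U₀ : EReal) (hΛ : 0 < Λ) (hr₀ : 0 < r₀)
    (hU₀ : U₀ < (u₁ : EReal))
    (J : Set ℝ) (hJ : J.OrdConnected)
    (r Ω : ℝ × ℝ → ℝ)
    (hrC2 : ContDiff ℝ 2 r) (hΩC2 : ContDiff ℝ 2 Ω)
    (S : Set (ℝ × ℝ))
    (hS : S = {p : ℝ × ℝ | U₀ < (p.1 : EReal) ∧ p.1 ≤ u₁ ∧ p.2 ∈ J})
    (hrlow : ∀ p ∈ S, r₀ ≤ r p)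
    (hrv : ∀ p ∈ S, 0 ≤ pdv r p)
    (hineq : ∀ p ∈ S, Λ * (Ω p) ^ 2 * r p ≤ 2 * pdu (pdv r) p) :
    ∀ v ∈ J,
      (∀ u : ℝ, U₀ < (u : EReal) → u ≤ u₁ →
        ∫ u' in Ioc u u₁, (Ω (u', v)) ^ 2 ≤ 2 * pdv r (u₁, v) / (Λ * r₀)) ∧
      IntegrableOn (fun u' => (Ω (u', v)) ^ 2) {u' : ℝ | U₀ < (u' : EReal) ∧ u' ≤ u₁} := by
  intro v hv
  have hΩc : Continuous fun t : ℝ => (Ω (t, v)) ^ 2 :=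
    ((hΩC2.continuous.comp (continuous_id.prodMk continuous_const)).pow 2)
  have hpdv1 : ContDiff ℝ 1 (pdv r) := by
    have h : ContDiff ℝ 1 (fderiv ℝ r) := hrC2.fderiv_right (by norm_num)
    exact h.clm_apply contDiff_const
  have hpduc : Continuous fun t : ℝ => pdu (pdv r) (t, v) := by
    have h : ContDiff ℝ 0 (fderiv ℝ (pdv r)) := hpdv1.fderiv_right (by norm_num)
    exact ((h.clm_apply contDiff_const).continuous).comp
      (continuous_id.prodMk continuous_const)
  set g : ℝ → ℝ := fun u => pdv r (u, v) with hgdef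
  have hgderiv : ∀ u : ℝ, HasDerivAt g (pdu (pdv r) (u, v)) u := by
    intro u
    have hF : HasFDerivAt (pdv r) (fderiv ℝ (pdv r) (u, v)) (u, v) :=
      ((hpdv1.differentiable one_ne_zero) (u, v)).hasFDerivAt
    have hc : HasDerivAt (fun u : ℝ => (u, v)) ((1 : ℝ), (0 : ℝ)) u :=
      (hasDerivAt_id u).prodMk (hasDerivAt_const u v)
    exact hF.comp_hasDerivAt u hc
  have hgu₁mem : ((u₁, v) : ℝ × ℝ) ∈ S := by
    rw [hS]; exact ⟨hU₀, le_rfl, hv⟩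
  have hg₁ : 0 ≤ g u₁ := hrv _ hgu₁mem
  have key : ∀ u : ℝ, U₀ < (u : EReal) → u ≤ u₁ →
      ∫ u' in Ioc u u₁, (Ω (u', v)) ^ 2 ≤ 2 * pdv r (u₁, v) / (Λ * r₀) := by
    intro u hu huu
    have hsub : ∀ t ∈ Icc u u₁, ((t, v) : ℝ × ℝ) ∈ S := by
      intro t ht
      rw [hS]
      exact ⟨lt_of_lt_of_le hu (by exact_mod_cast ht.1), ht.2, hv⟩
    have hFTC : ∫ t in u..u₁, pdu (pdv r) (t, v) = g u₁ - g u :=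
      intervalIntegral.integral_eq_sub_of_hasDerivAt (fun t _ => hgderiv t)
        (hpduc.intervalIntegrable u u₁)
    have hmono : ∫ t in u..u₁, Λ * r₀ / 2 * (Ω (t, v)) ^ 2
        ≤ ∫ t in u..u₁, pdu (pdv r) (t, v) := by
      apply intervalIntegral.integral_mono_on huu
      · exact ((hΩc.const_smul (Λ * r₀ / 2)).intervalIntegrable u u₁)
      · exact hpduc.intervalIntegrable u u₁
      · intro t ht
        have h1 := hineq _ (hsub t ht)
        have h2 := hrlow _ (hsub t ht)
        have h3 : Λ * Ω (t, v) ^ 2 * r₀ ≤ Λ * Ω (t, v) ^ 2 * r (t, v) :=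
          mul_le_mul_of_nonneg_left h2 (by positivity)
        linarith
    have hgu : 0 ≤ g u := hrv _ (hsub u ⟨le_rfl, huu⟩)
    have hconst : ∫ t in u..u₁, Λ * r₀ / 2 * (Ω (t, v)) ^ 2
        = Λ * r₀ / 2 * ∫ t in u..u₁, (Ω (t, v)) ^ 2 :=
      intervalIntegral.integral_const_mul _ _
    rw [hconst, hFTC] at hmono
    rw [← intervalIntegral.integral_of_le huu]
    rw [le_div_iff₀ (by positivity : (0 : ℝ) < Λ * r₀)]
    nlinarith
  refine ⟨key, ?_⟩
  by_cases hb : U₀ = ⊥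
  · have hset : {u' : ℝ | U₀ < (u' : EReal) ∧ u' ≤ u₁} = Iic u₁ := by
      ext x; simp [hb]
    rw [hset]
    refine integrableOn_Iic_of_intervalIntegral_norm_bounded
      (2 * pdv r (u₁, v) / (Λ * r₀)) u₁ (a := fun n : ℕ => u₁ - n) (l := Filter.atTop)
      (fun _ => hΩc.integrableOn_Ioc) ?_ ?_
    · exact Filter.tendsto_atTop_atBot.mpr fun b =>
        ⟨⌈u₁ - b⌉₊, fun n hn => by
          have := Nat.le_ceil (u₁ - b)
          have hn' : (⌈u₁ - b⌉₊ : ℝ) ≤ n := Nat.cast_le.mpr hn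
          linarith⟩
    · filter_upwards with n
      have hle : u₁ - (n : ℝ) ≤ u₁ := by linarith [Nat.cast_nonneg (α := ℝ) n]
      rw [intervalIntegral.integral_of_le hle]
      simp only [Real.norm_eq_abs, abs_pow, sq_abs]
      exact key _ (by rw [hb]; exact EReal.bot_lt_coe _) hle
  · obtain ⟨a, rfl⟩ : ∃ a : ℝ, U₀ = (a : EReal) := by
      induction U₀ with
      | bot => exact absurd rfl hb
      | coe a => exact ⟨a, rfl⟩
      | top => exact absurd hU₀ (by simp)
    have hset : {u' : ℝ | (a : EReal) < (u' : EReal) ∧ u' ≤ u₁} = Ioc a u₁ := by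
      ext x; simp [EReal.coe_lt_coe_iff, Ioc]
    rw [hset]
    exact hΩc.integrableOn_Ioc
end

section
/- Let M > 0 and F₀ > 0, and let f : ℝ³ → [0, F₀] be a measurable function with f(p) = 0 whenever |p₂| > M or |p₃| > M, and with ∫_{ℝ³} p⁰(p) f(p) dp < ∞, where p⁰(p) = √(1 + p₁² + p₂² + p₃²). Then for every δ > 0, ∫_{ℝ³} f(p)·(p⁰(p) − p₁)/p⁰(p) dp ≤ δ^{−1} ∫_{ℝ³} f(p)·(p⁰(p) − p₁)²/p⁰(p) dp + 4M²F₀·δ. -/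
open Real MeasureTheory

/-- The relativistic energy `p⁰` of a unit-mass particle with spatial momentum `p`. -/
noncomputable def en (p : Fin 3 → ℝ) : ℝ :=
  Real.sqrt (1 + (p 0) ^ 2 + (p 1) ^ 2 + (p 2) ^ 2)

section Aux

open Set Filter

lemma pcse_sqrt_sub_nonneg (c x : ℝ) (hc : 0 < c) : 0 ≤ Real.sqrt (c + x ^ 2) - x := by
  have h : |x| ≤ Real.sqrt (c + x ^ 2) := by
    rw [← Real.sqrt_sq_eq_abs]
    exact Real.sqrt_le_sqrt (by nlinarith)
  have := le_abs_self x
  linarith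

lemma pcse_sqrt_pos (c x : ℝ) (hc : 0 < c) : 0 < Real.sqrt (c + x ^ 2) :=
  Real.sqrt_pos.2 (by positivity)

lemma pcse_hasDerivAt_g (c : ℝ) (hc : 0 < c) (x : ℝ) :
    HasDerivAt (fun y => y - Real.sqrt (c + y ^ 2))
      ((Real.sqrt (c + x ^ 2) - x) / Real.sqrt (c + x ^ 2)) x := by
  have h1 : HasDerivAt (fun y : ℝ => c + y ^ 2) (2 * x) x := by
    simpa using ((hasDerivAt_pow 2 x).const_add c)
  have h2 : HasDerivAt (fun y => Real.sqrt (c + y ^ 2))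
      (2 * x / (2 * Real.sqrt (c + x ^ 2))) x :=
    (Real.hasDerivAt_sqrt (by positivity)).comp x h1 |>.congr_deriv (by ring)
  have h3 : HasDerivAt (fun y => y - Real.sqrt (c + y ^ 2))
      (1 - 2 * x / (2 * Real.sqrt (c + x ^ 2))) x := (hasDerivAt_id x).sub h2
  convert h3 using 1
  have hs := (pcse_sqrt_pos c x hc).ne'
  field_simp

lemma pcse_tendsto_g (c : ℝ) (hc : 0 < c) :
    Tendsto (fun y => y - Real.sqrt (c + y ^ 2)) atTop (nhds 0) := by
  have h : Tendsto (fun y : ℝ => Real.sqrt (c + y ^ 2) - y) atTop (nhds 0) := by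
    apply squeeze_zero' (Eventually.of_forall fun y => pcse_sqrt_sub_nonneg c y hc)
    · filter_upwards [eventually_gt_atTop 0] with y hy
      have hs := pcse_sqrt_pos c y hc
      have key : Real.sqrt (c + y ^ 2) ≤ y + c / y := by
        have hsy := pcse_sqrt_sub_nonneg c y hc
        have hsq : Real.sqrt (c + y ^ 2) ^ 2 = c + y ^ 2 :=
          Real.sq_sqrt (by positivity)
        have h4 : Real.sqrt (c + y ^ 2) - y ≤ c / y :=
          (le_div_iff₀ hy).2 (by nlinarith)
        linarith
      linarith
    · exact Tendsto.div_atTop tendsto_const_nhds tendsto_id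
  simpa using h.neg

lemma pcse_sqrt_at_a (c δ : ℝ) (hc : 0 < c) (hδ : 0 < δ) :
    Real.sqrt (c + ((c - δ ^ 2) / (2 * δ)) ^ 2) = (c - δ ^ 2) / (2 * δ) + δ := by
  set a := (c - δ ^ 2) / (2 * δ) with ha
  have hpos : 0 < a + δ := by
    have h2 : a + δ = (c + δ ^ 2) / (2 * δ) := by rw [ha]; field_simp; ring
    rw [h2]; positivity
  have : c + a ^ 2 = (a + δ) ^ 2 := by
    rw [ha]; field_simp; ring
  rw [this, Real.sqrt_sq hpos.le]

lemma pcse_oneD_integrable (c δ : ℝ) (hc : 0 < c) (hδ : 0 < δ) :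
    IntegrableOn (fun x => (Real.sqrt (c + x ^ 2) - x) / Real.sqrt (c + x ^ 2))
      (Set.Ioi ((c - δ ^ 2) / (2 * δ))) :=
  integrableOn_Ioi_deriv_of_nonneg' (fun x _ => pcse_hasDerivAt_g c hc x)
    (fun x _ => div_nonneg (pcse_sqrt_sub_nonneg c x hc) (pcse_sqrt_pos c x hc).le)
    (pcse_tendsto_g c hc)

lemma pcse_oneD_integral (c δ : ℝ) (hc : 0 < c) (hδ : 0 < δ) :
    ∫ x in Set.Ioi ((c - δ ^ 2) / (2 * δ)),
      (Real.sqrt (c + x ^ 2) - x) / Real.sqrt (c + x ^ 2) = δ := by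
  rw [integral_Ioi_of_hasDerivAt_of_nonneg' (fun x _ => pcse_hasDerivAt_g c hc x)
    (fun x _ => div_nonneg (pcse_sqrt_sub_nonneg c x hc) (pcse_sqrt_pos c x hc).le)
    (pcse_tendsto_g c hc)]
  rw [pcse_sqrt_at_a c δ hc hδ]
  ring

lemma pcse_set_eq (c δ : ℝ) (hc : 0 < c) (hδ : 0 < δ) :
    {x : ℝ | Real.sqrt (c + x ^ 2) - x < δ} = Set.Ioi ((c - δ ^ 2) / (2 * δ)) := by
  ext x
  simp only [Set.mem_setOf_eq, Set.mem_Ioi]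
  constructor
  · intro h
    have h1 : Real.sqrt (c + x ^ 2) < x + δ := by linarith
    have hpos : 0 < x + δ := lt_of_le_of_lt (Real.sqrt_nonneg _) h1
    have h2 : c + x ^ 2 < (x + δ) ^ 2 := (Real.sqrt_lt' hpos).1 h1
    rw [div_lt_iff₀ (by positivity)]
    nlinarith
  · intro h
    have h' : c - δ ^ 2 < x * (2 * δ) := (div_lt_iff₀ (by positivity)).1 h
    have hpos : 0 < x + δ := by nlinarith
    have h2 : c + x ^ 2 < (x + δ) ^ 2 := by nlinarith
    have := (Real.sqrt_lt' hpos).2 h2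
    linarith

lemma pcse_en_pos (p : Fin 3 → ℝ) : 0 < en p :=
  Real.sqrt_pos.2 (by positivity)

lemma pcse_one_le_en (p : Fin 3 → ℝ) : 1 ≤ en p := by
  rw [show (1 : ℝ) = Real.sqrt 1 from (Real.sqrt_one).symm]
  exact Real.sqrt_le_sqrt (by nlinarith)

lemma pcse_abs_le_en (p : Fin 3 → ℝ) : |p 0| ≤ en p := by
  rw [← Real.sqrt_sq_eq_abs]
  exact Real.sqrt_le_sqrt (by nlinarith)

lemma pcse_en_continuous : Continuous en := by
  unfold en
  fun_prop

lemma pcse_en_cons (x : ℝ) (q : Fin 2 → ℝ) :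
    en (Fin.cons x q) = Real.sqrt ((1 + (q 0) ^ 2 + (q 1) ^ 2) + x ^ 2) := by
  unfold en
  congr 1
  show 1 + x ^ 2 + (q 0) ^ 2 + (q 1) ^ 2 = _
  ring

lemma pcse_symm_eq (x : ℝ) (q : Fin 2 → ℝ) :
    ((MeasurableEquiv.piFinSuccAbove (fun _ : Fin 3 => ℝ) 0).symm (x, q)) = Fin.cons x q := by
  simp [MeasurableEquiv.piFinSuccAbove, Fin.insertNthEquiv, Fin.insertNth_zero]

lemma pcse_lintegral_H_le (M δ : ℝ) (hM : 0 < M) (hδ : 0 < δ) :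
    ∫⁻ p, ENNReal.ofReal
        (Set.indicator {p : Fin 3 → ℝ | |p 1| ≤ M ∧ |p 2| ≤ M ∧ en p - p 0 < δ}
          (fun p => (en p - p 0) / en p) p)
      ≤ ENNReal.ofReal ((2 * M) ^ 2 * δ) := by
  set S : Set (Fin 3 → ℝ) := {p : Fin 3 → ℝ | |p 1| ≤ M ∧ |p 2| ≤ M ∧ en p - p 0 < δ}
    with hS
  have hSmeas : MeasurableSet S := by
    apply MeasurableSet.inter
    · exact measurableSet_le ((measurable_pi_apply _).abs) measurable_const
    apply MeasurableSet.inter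
    · exact measurableSet_le ((measurable_pi_apply _).abs) measurable_const
    · exact measurableSet_lt
        ((pcse_en_continuous.measurable).sub (measurable_pi_apply 0)) measurable_const
  have hφmeas : Measurable (fun p : Fin 3 → ℝ => (en p - p 0) / en p) := by
    exact ((pcse_en_continuous.measurable).sub (measurable_pi_apply 0)).div
      pcse_en_continuous.measurable
  set G : (Fin 3 → ℝ) → ENNReal :=
    fun p => ENNReal.ofReal (S.indicator (fun p => (en p - p 0) / en p) p) with hG
  have hGmeas : Measurable G :=
    ENNReal.measurable_ofReal.comp (hφmeas.indicator hSmeas)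
  set e := MeasurableEquiv.piFinSuccAbove (fun _ : Fin 3 => ℝ) 0 with he
  have hmp : MeasurePreserving e volume volume :=
    volume_preserving_piFinSuccAbove (fun _ : Fin 3 => ℝ) 0
  have step1 : ∫⁻ p, G p
      = ∫⁻ y : ℝ × (Fin 2 → ℝ), G (e.symm y)
          ∂((volume : Measure ℝ).prod (volume : Measure (Fin 2 → ℝ))) := by
    have := hmp.lintegral_comp (f := fun y => G (e.symm y))
      (hGmeas.comp e.symm.measurable)
    rw [Measure.volume_eq_prod] at this
    simpa using this
  rw [step1,
    lintegral_prod_symm (fun y => G (e.symm y))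
      ((hGmeas.comp e.symm.measurable : Measurable fun y : ℝ × (Fin 2 → ℝ) => G (e.symm y)).aemeasurable)]
  have inner_le : ∀ q : Fin 2 → ℝ,
      (∫⁻ x : ℝ, G (e.symm (x, q)))
        ≤ Set.indicator {q : Fin 2 → ℝ | |q 0| ≤ M ∧ |q 1| ≤ M}
            (fun _ => ENNReal.ofReal δ) q := by
    intro q
    by_cases hq : |q 0| ≤ M ∧ |q 1| ≤ M
    · rw [Set.indicator_of_mem
        (show q ∈ {q : Fin 2 → ℝ | |q 0| ≤ M ∧ |q 1| ≤ M} from hq)]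
      have hc : (0 : ℝ) < 1 + (q 0) ^ 2 + (q 1) ^ 2 := by positivity
      set c : ℝ := 1 + (q 0) ^ 2 + (q 1) ^ 2 with hcdef
      set a : ℝ := (c - δ ^ 2) / (2 * δ) with hadef
      have hval : ∀ x : ℝ, G (e.symm (x, q)) =
          Set.indicator (Set.Ioi a)
            (fun x => ENNReal.ofReal
              ((Real.sqrt (c + x ^ 2) - x) / Real.sqrt (c + x ^ 2))) x := by
        intro x
        have hcons : e.symm (x, q) = Fin.cons x q := pcse_symm_eq x q
        have hen : en (Fin.cons x q) = Real.sqrt (c + x ^ 2) := pcse_en_cons x q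
        have hmemIff : (Fin.cons x q : Fin 3 → ℝ) ∈ S ↔ x ∈ Set.Ioi a := by
          rw [← pcse_set_eq c δ hc hδ]
          constructor
          · intro hm
            have := hm.2.2
            rw [hen] at this
            exact this
          · intro hm
            refine ⟨hq.1, hq.2, ?_⟩
            rw [hen]
            exact hm
        simp only [hG, hcons]
        by_cases hx : x ∈ Set.Ioi a
        · rw [Set.indicator_of_mem (hmemIff.2 hx), Set.indicator_of_mem hx, hen]
          rfl
        · rw [Set.indicator_of_notMem (fun hm => hx (hmemIff.1 hm)),
            Set.indicator_of_notMem hx]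
          simp
      apply le_of_eq
      calc ∫⁻ x : ℝ, G (e.symm (x, q))
          = ∫⁻ x in Set.Ioi a,
              ENNReal.ofReal ((Real.sqrt (c + x ^ 2) - x) / Real.sqrt (c + x ^ 2)) := by
            rw [funext hval, lintegral_indicator measurableSet_Ioi]
        _ = ENNReal.ofReal
              (∫ x in Set.Ioi a, (Real.sqrt (c + x ^ 2) - x) / Real.sqrt (c + x ^ 2)) := by
            rw [ofReal_integral_eq_lintegral_ofReal (pcse_oneD_integrable c δ hc hδ)
              (Filter.Eventually.of_forall fun x =>
                div_nonneg (pcse_sqrt_sub_nonneg c x hc) (pcse_sqrt_pos c x hc).le)]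
        _ = ENNReal.ofReal δ := by rw [pcse_oneD_integral c δ hc hδ]
    · rw [Set.indicator_of_notMem
        (show q ∉ {q : Fin 2 → ℝ | |q 0| ≤ M ∧ |q 1| ≤ M} from hq)]
      have hval : ∀ x : ℝ, G (e.symm (x, q)) = 0 := by
        intro x
        have hcons : e.symm (x, q) = Fin.cons x q := pcse_symm_eq x q
        have hns : (Fin.cons x q : Fin 3 → ℝ) ∉ S := by
          intro hm
          exact hq ⟨hm.1, hm.2.1⟩
        simp only [hG, hcons, Set.indicator_of_notMem hns]
        simp
      simp [funext hval]
  have hbox : MeasurableSet {q : Fin 2 → ℝ | |q 0| ≤ M ∧ |q 1| ≤ M} := by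
    apply MeasurableSet.inter
    · exact measurableSet_le ((measurable_pi_apply _).abs) measurable_const
    · exact measurableSet_le ((measurable_pi_apply _).abs) measurable_const
  calc ∫⁻ q : Fin 2 → ℝ, ∫⁻ x : ℝ, G (e.symm (x, q))
      ≤ ∫⁻ q : Fin 2 → ℝ, Set.indicator {q : Fin 2 → ℝ | |q 0| ≤ M ∧ |q 1| ≤ M}
          (fun _ => ENNReal.ofReal δ) q := lintegral_mono inner_le
    _ = ENNReal.ofReal δ * volume {q : Fin 2 → ℝ | |q 0| ≤ M ∧ |q 1| ≤ M} :=
        lintegral_indicator_const hbox _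
    _ = ENNReal.ofReal ((2 * M) ^ 2 * δ) := by
        have hbe : {q : Fin 2 → ℝ | |q 0| ≤ M ∧ |q 1| ≤ M}
            = Set.pi Set.univ (fun _ : Fin 2 => Set.Icc (-M) M) := by
          ext q
          simp only [Set.mem_setOf_eq, Set.mem_pi, Set.mem_univ, true_implies,
            Set.mem_Icc, Fin.forall_fin_two, ← abs_le]
        rw [hbe, volume_pi_pi]
        simp only [Real.volume_Icc, Finset.prod_const, Finset.card_univ, Fintype.card_fin]
        rw [show M - -M = 2 * M by ring, ← ENNReal.ofReal_pow (by positivity),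
          ← ENNReal.ofReal_mul (by positivity)]
        rw [mul_comm]

end Aux

theorem particle_current_splitting_estimate
    (M F₀ : ℝ) (hM : 0 < M) (hF₀ : 0 < F₀)
    (f : (Fin 3 → ℝ) → ℝ) (hf : Measurable f)
    (hfnn : ∀ p, 0 ≤ f p) (hfle : ∀ p, f p ≤ F₀)
    (hsupp : ∀ p : Fin 3 → ℝ, M < |p 1| ∨ M < |p 2| → f p = 0)
    (hint : Integrable (fun p => en p * f p)) :
    ∀ δ : ℝ, 0 < δ →
      (∫ p, f p * (en p - p 0) / en p)
        ≤ δ⁻¹ * (∫ p, f p * (en p - p 0) ^ 2 / en p) + 4 * M ^ 2 * F₀ * δ := by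
  intro δ hδ
  set S : Set (Fin 3 → ℝ) := {p : Fin 3 → ℝ | |p 1| ≤ M ∧ |p 2| ≤ M ∧ en p - p 0 < δ}
    with hS
  set H : (Fin 3 → ℝ) → ℝ := S.indicator (fun p => (en p - p 0) / en p) with hH
  have hennn : ∀ p, 0 ≤ en p - p 0 := fun p => by
    have := pcse_abs_le_en p
    have := le_abs_self (p 0)
    linarith
  have henlt : ∀ p, en p - p 0 ≤ 2 * en p := fun p => by
    have := pcse_abs_le_en p
    have := neg_abs_le (p 0)
    linarith
  have hHnn : ∀ p, 0 ≤ H p :=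
    fun p => Set.indicator_nonneg
      (fun p _ => div_nonneg (hennn p) (pcse_en_pos p).le) p
  have hSmeas : MeasurableSet S := by
    apply MeasurableSet.inter
    · exact measurableSet_le ((measurable_pi_apply _).abs) measurable_const
    apply MeasurableSet.inter
    · exact measurableSet_le ((measurable_pi_apply _).abs) measurable_const
    · exact measurableSet_lt
        ((pcse_en_continuous.measurable).sub (measurable_pi_apply 0)) measurable_const
  have hHmeas : Measurable H :=
    (((pcse_en_continuous.measurable).sub (measurable_pi_apply 0)).div
      pcse_en_continuous.measurable).indicator hSmeas
  -- integrability of the two f-integrands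
  have hdom : Integrable (fun p => 4 * (en p * f p)) := hint.const_mul 4
  have hI1 : Integrable (fun p => f p * (en p - p 0) / en p) := by
    refine hdom.mono ?_ (Filter.Eventually.of_forall fun p => ?_)
    · exact ((hf.mul ((pcse_en_continuous.measurable).sub (measurable_pi_apply 0))).div
        pcse_en_continuous.measurable).aestronglyMeasurable
    · have h1 := pcse_en_pos p
      have h2 := pcse_one_le_en p
      have h3 := hennn p
      have h4 := henlt p
      have h5 := hfnn p
      rw [Real.norm_of_nonneg (by positivity), Real.norm_of_nonneg (by positivity)]
      rw [div_le_iff₀ h1]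
      nlinarith [mul_le_mul_of_nonneg_left h4 h5, mul_nonneg h5 h1.le,
        mul_le_mul_of_nonneg_left h2 (mul_nonneg h5 h1.le)]
  have hI2 : Integrable (fun p => f p * (en p - p 0) ^ 2 / en p) := by
    refine hdom.mono ?_ (Filter.Eventually.of_forall fun p => ?_)
    · exact ((hf.mul (((pcse_en_continuous.measurable).sub (measurable_pi_apply 0)).pow_const 2)).div
        pcse_en_continuous.measurable).aestronglyMeasurable
    · have h1 := pcse_en_pos p
      have h2 := pcse_one_le_en p
      have h3 := hennn p
      have h4 := henlt p
      have h5 := hfnn p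
      rw [Real.norm_of_nonneg (by positivity), Real.norm_of_nonneg (by positivity)]
      rw [div_le_iff₀ h1]
      have h6 : (en p - p 0) ^ 2 ≤ 4 * en p ^ 2 := by nlinarith
      nlinarith [mul_le_mul_of_nonneg_left h6 h5]
  -- integrability and integral bound for H
  have hlint := pcse_lintegral_H_le M δ hM hδ
  have hHint : Integrable H := by
    refine ⟨hHmeas.aestronglyMeasurable, ?_⟩
    rw [hasFiniteIntegral_iff_ofReal (Filter.Eventually.of_forall hHnn)]
    exact lt_of_le_of_lt hlint ENNReal.ofReal_lt_top
  have hHle : ∫ p, H p ≤ (2 * M) ^ 2 * δ := by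
    rw [integral_eq_lintegral_of_nonneg_ae (Filter.Eventually.of_forall hHnn)
      hHmeas.aestronglyMeasurable]
    calc (∫⁻ p, ENNReal.ofReal (H p)).toReal
        ≤ (ENNReal.ofReal ((2 * M) ^ 2 * δ)).toReal :=
          ENNReal.toReal_mono ENNReal.ofReal_ne_top hlint
      _ = (2 * M) ^ 2 * δ := ENNReal.toReal_ofReal (by positivity)
  -- pointwise estimate
  have hpt : ∀ p, f p * (en p - p 0) / en p
      ≤ δ⁻¹ * (f p * (en p - p 0) ^ 2 / en p) + F₀ * H p := by
    intro p
    have h1 := pcse_en_pos p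
    have h3 := hennn p
    have h5 := hfnn p
    have hT2 : 0 ≤ F₀ * H p := mul_nonneg hF₀.le (hHnn p)
    have hT1 : 0 ≤ δ⁻¹ * (f p * (en p - p 0) ^ 2 / en p) := by positivity
    rcases eq_or_lt_of_le h5 with heq | hfp
    · have hz : f p * (en p - p 0) / en p = 0 := by rw [← heq]; simp
      linarith
    · have hbox : |p 1| ≤ M ∧ |p 2| ≤ M := by
        by_contra hcon
        rw [not_and_or, not_le, not_le] at hcon
        exact absurd (hsupp p hcon) (ne_of_gt hfp)
      by_cases hxd : en p - p 0 < δ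
      · have hmem : p ∈ S := ⟨hbox.1, hbox.2, hxd⟩
        have hHp : H p = (en p - p 0) / en p := by
          rw [hH, Set.indicator_of_mem hmem]
        have : f p * (en p - p 0) / en p ≤ F₀ * H p := by
          rw [hHp, mul_div_assoc]
          exact mul_le_mul_of_nonneg_right (hfle p) (div_nonneg h3 h1.le)
        linarith
      · push_neg at hxd
        have hkey : (en p - p 0) ≤ δ⁻¹ * (en p - p 0) ^ 2 := by
          rw [← sub_nonneg]
          have : δ⁻¹ * (en p - p 0) ^ 2 - (en p - p 0)
              = δ⁻¹ * ((en p - p 0) * ((en p - p 0) - δ)) := by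
            field_simp
          rw [this]
          exact mul_nonneg (inv_nonneg.2 hδ.le) (mul_nonneg h3 (by linarith))
        have h7 : δ⁻¹ * (f p * (en p - p 0) ^ 2 / en p) * en p
            = δ⁻¹ * (f p * (en p - p 0) ^ 2) := by
          field_simp
        have : f p * (en p - p 0) / en p ≤ δ⁻¹ * (f p * (en p - p 0) ^ 2 / en p) := by
          rw [div_le_iff₀ h1, h7]
          nlinarith [mul_le_mul_of_nonneg_left hkey h5]
        linarith
  -- assemble
  have hstep : (∫ p, f p * (en p - p 0) / en p)
      ≤ ∫ p, (δ⁻¹ * (f p * (en p - p 0) ^ 2 / en p) + F₀ * H p) :=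
    integral_mono hI1 ((hI2.const_mul δ⁻¹).add (hHint.const_mul F₀)) hpt
  rw [integral_add (hI2.const_mul δ⁻¹) (hHint.const_mul F₀),
    integral_const_mul, integral_const_mul] at hstep
  have hfin : F₀ * ∫ p, H p ≤ 4 * M ^ 2 * F₀ * δ := by
    calc F₀ * ∫ p, H p ≤ F₀ * ((2 * M) ^ 2 * δ) :=
          mul_le_mul_of_nonneg_left hHle hF₀.le
      _ = 4 * M ^ 2 * F₀ * δ := by ring
  linarith
end

section
/- Let a < b be real numbers, let r₀ > 0, and let U, A, r : (a, b] → ℝ be functions with r ≥ r₀ on (a, b]. Suppose the three functions g₁ = e^{2U}, g₂ = A e^{2U}, and g₃ = r² e^{−2U} + A² e^{2U}, defined on (a, b], extend to C¹ functions on the closed interval [a, b]. Then U, A, and r extend to C¹ functions on [a, b] (in particular, g₁ extends to a strictly positive function, and r extends to a function ≥ r₀). -/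
open Real Set

/-- If a continuous function on `[a,b]` is `≥ c` on `(a,b]`, it is `≥ c` on `[a,b]`. -/
lemma ge_on_Icc_of_ge_on_Ioc (a b c : ℝ) (hab : a < b) (f : ℝ → ℝ)
    (hf : ContinuousOn f (Icc a b)) (h : ∀ t ∈ Ioc a b, c ≤ f t) :
    ∀ t ∈ Icc a b, c ≤ f t := by
  have hclosed : IsClosed (Icc a b ∩ f ⁻¹' Ici c) :=
    hf.preimage_isClosed_of_isClosed isClosed_Icc isClosed_Ici
  have hsub : Ioc a b ⊆ Icc a b ∩ f ⁻¹' Ici c := fun t ht =>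
    ⟨Ioc_subset_Icc_self ht, h t ht⟩
  intro t ht
  have : t ∈ closure (Ioc a b) := by
    rw [closure_Ioc hab.ne]; exact ht
  exact ((closure_minimal hsub hclosed) this).2

theorem killing_extension
    (a b r₀ : ℝ) (hab : a < b) (hr₀ : 0 < r₀)
    (U A r g₁ g₂ g₃ : ℝ → ℝ)
    (hrlow : ∀ t ∈ Ioc a b, r₀ ≤ r t)
    (h₁ : ∀ t ∈ Ioc a b, g₁ t = Real.exp (2 * U t))
    (h₂ : ∀ t ∈ Ioc a b, g₂ t = A t * Real.exp (2 * U t))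
    (h₃ : ∀ t ∈ Ioc a b,
      g₃ t = (r t) ^ 2 * Real.exp (-(2 * U t)) + (A t) ^ 2 * Real.exp (2 * U t))
    (hg₁ : ContDiffOn ℝ 1 g₁ (Icc a b)) (hg₂ : ContDiffOn ℝ 1 g₂ (Icc a b))
    (hg₃ : ContDiffOn ℝ 1 g₃ (Icc a b)) :
    ∃ U' A' r' : ℝ → ℝ,
      ContDiffOn ℝ 1 U' (Icc a b) ∧ ContDiffOn ℝ 1 A' (Icc a b) ∧
      ContDiffOn ℝ 1 r' (Icc a b) ∧
      (∀ t ∈ Ioc a b, U' t = U t ∧ A' t = A t ∧ r' t = r t) ∧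
      (∀ t ∈ Icc a b, 0 < g₁ t) ∧ (∀ t ∈ Icc a b, r₀ ≤ r' t) := by
  set F : ℝ → ℝ := fun t => g₁ t * g₃ t - g₂ t ^ 2 with hFdef
  have hFC : ContDiffOn ℝ 1 F (Icc a b) := (hg₁.mul hg₃).sub (hg₂.pow 2)
  -- On Ioc, F t = r t ^ 2
  have hFr : ∀ t ∈ Ioc a b, F t = r t ^ 2 := by
    intro t ht
    simp only [hFdef, h₁ t ht, h₂ t ht, h₃ t ht]
    have hne : Real.exp (2 * U t) ≠ 0 := (Real.exp_pos _).ne'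
    rw [Real.exp_neg]
    field_simp
    ring
  have hFlow : ∀ t ∈ Icc a b, r₀ ^ 2 ≤ F t := by
    refine ge_on_Icc_of_ge_on_Ioc a b _ hab F hFC.continuousOn ?_
    intro t ht
    rw [hFr t ht]
    exact pow_le_pow_left₀ hr₀.le (hrlow t ht) 2
  have hg₁nonneg : ∀ t ∈ Icc a b, 0 ≤ g₁ t := by
    refine ge_on_Icc_of_ge_on_Ioc a b 0 hab g₁ hg₁.continuousOn ?_
    intro t ht; rw [h₁ t ht]; exact (Real.exp_pos _).le
  have hg₁pos : ∀ t ∈ Icc a b, 0 < g₁ t := by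
    intro t ht
    rcases lt_or_eq_of_le (hg₁nonneg t ht) with h | h
    · exact h
    · exfalso
      have := hFlow t ht
      simp only [hFdef, ← h] at this
      nlinarith [sq_nonneg (g₂ t), sq_nonneg r₀]
  have hg₁ne : ∀ t ∈ Icc a b, g₁ t ≠ 0 := fun t ht => (hg₁pos t ht).ne'
  have hFpos : ∀ t ∈ Icc a b, 0 < F t := fun t ht =>
    lt_of_lt_of_le (pow_pos hr₀ 2) (hFlow t ht)
  refine ⟨fun t => Real.log (g₁ t) / 2, fun t => g₂ t / g₁ t,
      fun t => Real.sqrt (F t), ?_, ?_, ?_, ?_, hg₁pos, ?_⟩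
  · exact (hg₁.log hg₁ne).div_const 2
  · exact hg₂.div hg₁ hg₁ne
  · exact hFC.sqrt fun t ht => (hFpos t ht).ne'
  · intro t ht
    have hrpos : 0 < r t := lt_of_lt_of_le hr₀ (hrlow t ht)
    refine ⟨?_, ?_, ?_⟩ <;> beta_reduce
    · rw [h₁ t ht, Real.log_exp]; ring
    · rw [h₂ t ht, h₁ t ht, mul_div_assoc, div_self (Real.exp_pos _).ne', mul_one]
    · rw [hFr t ht, Real.sqrt_sq hrpos.le]
  · intro t ht
    beta_reduce
    calc r₀ = Real.sqrt (r₀ ^ 2) := (Real.sqrt_sq hr₀.le).symm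
    _ ≤ Real.sqrt (F t) := Real.sqrt_le_sqrt (hFlow t ht)
end

section
/- Let Λ > 0, let I ⊆ (0, ∞) be an open interval, and let γ, δ : I → ℝ be differentiable functions with δ > 0 satisfying γ′(t) = 1/(4t) + δ(t)·Λ·e^{2γ(t)} and δ′(t) = −4δ(t)²·e^{2γ(t)}·Λ for all t ∈ I. Then the function t ↦ 4γ(t) + log δ(t) − log t is constant on I; equivalently, there exists a constant A > 0 such that e^{2γ(t)} = A·√(t/δ(t)) for all t ∈ I. -/
open Real Set

theorem homogeneous_first_integral
    (Λ : ℝ) (hΛ : 0 < Λ) (a b : ℝ) (ha : 0 ≤ a)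
    (γ δ : ℝ → ℝ) (hδpos : ∀ t ∈ Ioo a b, 0 < δ t)
    (hγ' : ∀ t ∈ Ioo a b,
      HasDerivAt γ (1 / (4 * t) + δ t * Λ * Real.exp (2 * γ t)) t)
    (hδ' : ∀ t ∈ Ioo a b,
      HasDerivAt δ (-(4 * (δ t) ^ 2 * Real.exp (2 * γ t) * Λ)) t) :
    (∃ c : ℝ, ∀ t ∈ Ioo a b, 4 * γ t + Real.log (δ t) - Real.log t = c) ∧
    (∃ A : ℝ, 0 < A ∧ ∀ t ∈ Ioo a b, Real.exp (2 * γ t) = A * Real.sqrt (t / δ t)) := by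
  rcases isEmpty_or_nonempty (Ioo a b) with he | hne
  · exact ⟨⟨0, fun t ht => absurd ⟨t, ht⟩ (not_nonempty_iff.2 he)⟩,
      1, one_pos, fun t ht => absurd ⟨t, ht⟩ (not_nonempty_iff.2 he)⟩
  set F : ℝ → ℝ := fun t => 4 * γ t + Real.log (δ t) - Real.log t with hFdef
  have htpos : ∀ t ∈ Ioo a b, 0 < t := fun t ht => lt_of_le_of_lt ha ht.1
  have hF' : ∀ t ∈ Ioo a b, HasDerivAt F 0 t := by
    intro t ht
    have hδne : δ t ≠ 0 := (hδpos t ht).ne'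
    have htne : t ≠ 0 := (htpos t ht).ne'
    have h1 : HasDerivAt (fun s => Real.log (δ s))
        (-(4 * (δ t) ^ 2 * Real.exp (2 * γ t) * Λ) / δ t) t :=
      (hδ' t ht).log hδne
    have h2 : HasDerivAt (fun s : ℝ => Real.log s) (1 / t) t := by
      simpa using Real.hasDerivAt_log htne
    have h := (((hγ' t ht).const_mul 4).add h1).sub h2
    refine h.congr_deriv ?_
    field_simp
    ring
  obtain ⟨t0, ht0⟩ := hne
  have hconv : Convex ℝ (Ioo a b) := convex_Ioo a b
  have hconst : ∀ t ∈ Ioo a b, F t = F t0 := by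
    intro t ht
    refine hconv.is_const_of_fderivWithin_eq_zero
      (fun x hx => ((hF' x hx).differentiableAt).differentiableWithinAt) ?_ ht ht0
    intro x hx
    rw [fderivWithin_of_isOpen isOpen_Ioo hx, (hF' x hx).hasFDerivAt.fderiv]
    ext y
    simp
  refine ⟨⟨F t0, hconst⟩, Real.exp (F t0 / 2), Real.exp_pos _, fun t ht => ?_⟩
  have hδt := hδpos t ht
  have htp := htpos t ht
  have h := hconst t ht
  have hq : 0 < t / δ t := by positivity
  have hsqrt : Real.sqrt (t / δ t) = Real.exp ((Real.log t - Real.log (δ t)) / 2) := by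
    rw [← Real.exp_log (Real.sqrt_pos.2 hq), Real.log_sqrt hq.le,
      Real.log_div htp.ne' hδt.ne']
  rw [hsqrt, ← Real.exp_add]
  congr 1
  simp only [hFdef] at h
  linarith [h]
end

section
/- Let Λ > 0, A > 0, C ∈ ℝ, and let I ⊆ (0, ∞) be an open interval on which (4/3)AΛt^{3/2} + C > 0. Define δ(t) = ((4/3)AΛt^{3/2} + C)^{−2} and γ(t) = (1/2)·log(A·((4/3)AΛt² + C√t)) for t ∈ I. Then δ > 0, the argument of the logarithm is positive, and (γ, δ) satisfies γ′(t) = 1/(4t) + δ(t)·Λ·e^{2γ(t)} and δ′(t) = −4δ(t)²·e^{2γ(t)}·Λ for all t ∈ I. -/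
open Real Set


lemma aux_gamma (A Λ C t s u : ℝ) (ht : 0 < t) (hs : 0 < s) (h2 : s ^ 2 = t)
    (hu : 0 < u) (hA : 0 < A) (huC : 4 / 3 * A * Λ * (t * s) + C = u) :
    1 / (4 * t) + (u ^ 2)⁻¹ * Λ * (A * s * u) =
      1 / 2 * (A * (4 / 3 * A * Λ * (2 * t ^ 1) + C * (1 / (2 * s))) / (A * s * u)) := by
  subst h2
  have hC : C = u - 4 / 3 * A * Λ * (s ^ 2 * s) := by linarith
  subst hC
  field_simp
  ring

lemma aux_delta (A Λ C t s u : ℝ) (ht : 0 < t) (hs : 0 < s) (h2 : s ^ 2 = t)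
    (hu : 0 < u) (hA : 0 < A) (huC : 4 / 3 * A * Λ * (t * s) + C = u) :
    -(4 * ((u ^ 2)⁻¹) ^ 2 * (A * s * u) * Λ) =
      -(2 * u ^ (2 - 1) * (4 / 3 * A * Λ * (1 * s + t * (1 / (2 * s))))) / (u ^ 2) ^ 2 := by
  subst h2
  field_simp
  ring_nf

theorem explicit_solution_verification
    (Λ A C : ℝ) (hΛ : 0 < Λ) (hA : 0 < A) (a b : ℝ) (ha : 0 ≤ a)
    (hpos : ∀ t ∈ Ioo a b, 0 < 4 / 3 * A * Λ * (t * Real.sqrt t) + C)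
    (δ γ : ℝ → ℝ)
    (hδdef : ∀ t ∈ Ioo a b,
      δ t = ((4 / 3 * A * Λ * (t * Real.sqrt t) + C) ^ 2)⁻¹)
    (hγdef : ∀ t ∈ Ioo a b,
      γ t = 1 / 2 * Real.log (A * (4 / 3 * A * Λ * t ^ 2 + C * Real.sqrt t))) :
    ∀ t ∈ Ioo a b,
      0 < δ t ∧
      0 < A * (4 / 3 * A * Λ * t ^ 2 + C * Real.sqrt t) ∧
      HasDerivAt γ (1 / (4 * t) + δ t * Λ * Real.exp (2 * γ t)) t ∧
      HasDerivAt δ (-(4 * (δ t) ^ 2 * Real.exp (2 * γ t) * Λ)) t := by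
  intro t ht
  obtain ⟨hat, htb⟩ := ht
  have ht0 : 0 < t := lt_of_le_of_lt ha hat
  have hst : 0 < Real.sqrt t := Real.sqrt_pos.mpr ht0
  have hst2 : Real.sqrt t ^ 2 = t := Real.sq_sqrt ht0.le
  have hu : 0 < 4 / 3 * A * Λ * (t * Real.sqrt t) + C := hpos t ⟨hat, htb⟩
  have hgeq : A * (4 / 3 * A * Λ * t ^ 2 + C * Real.sqrt t)
      = A * Real.sqrt t * (4 / 3 * A * Λ * (t * Real.sqrt t) + C) := by
    linear_combination (-(4/3*A^2*Λ*t)) * hst2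
  have hg : (0:ℝ) < A * (4 / 3 * A * Λ * t ^ 2 + C * Real.sqrt t) := by
    rw [hgeq]; positivity
  have hδt : δ t = ((4 / 3 * A * Λ * (t * Real.sqrt t) + C) ^ 2)⁻¹ :=
    hδdef t ⟨hat, htb⟩
  have hδpos : 0 < δ t := by rw [hδt]; positivity
  have hexp : Real.exp (2 * γ t) = A * (4 / 3 * A * Λ * t ^ 2 + C * Real.sqrt t) := by
    rw [hγdef t ⟨hat, htb⟩,
      show (2:ℝ) * (1 / 2 * Real.log (A * (4 / 3 * A * Λ * t ^ 2 + C * Real.sqrt t)))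
        = Real.log (A * (4 / 3 * A * Λ * t ^ 2 + C * Real.sqrt t)) by ring,
      Real.exp_log hg]
  -- derivative of sqrt
  have hsqrt : HasDerivAt Real.sqrt (1 / (2 * Real.sqrt t)) t :=
    Real.hasDerivAt_sqrt ht0.ne'
  have h_tsqrt : HasDerivAt (fun x => x * Real.sqrt x)
      (1 * Real.sqrt t + t * (1 / (2 * Real.sqrt t))) t :=
    (hasDerivAt_id t).mul hsqrt
  have hU : HasDerivAt (fun x => 4 / 3 * A * Λ * (x * Real.sqrt x) + C)
      (4 / 3 * A * Λ * (1 * Real.sqrt t + t * (1 / (2 * Real.sqrt t)))) t :=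
    (h_tsqrt.const_mul (4 / 3 * A * Λ)).add_const C
  have hUne : (4 / 3 * A * Λ * (t * Real.sqrt t) + C) ≠ 0 := hu.ne'
  -- δ
  have hF : HasDerivAt (fun x => ((4 / 3 * A * Λ * (x * Real.sqrt x) + C) ^ 2)⁻¹)
      (-(↑2 * (4 / 3 * A * Λ * (t * Real.sqrt t) + C) ^ (2 - 1) *
        (4 / 3 * A * Λ * (1 * Real.sqrt t + t * (1 / (2 * Real.sqrt t)))))
        / ((4 / 3 * A * Λ * (t * Real.sqrt t) + C) ^ 2) ^ 2) t :=
    (hU.pow 2).inv (pow_ne_zero 2 hUne)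
  have heqδ : δ =ᶠ[nhds t] (fun x => ((4 / 3 * A * Λ * (x * Real.sqrt x) + C) ^ 2)⁻¹) := by
    filter_upwards [Ioo_mem_nhds hat htb] with x hx
    exact hδdef x hx
  have hδ' : HasDerivAt δ
      (-(↑2 * (4 / 3 * A * Λ * (t * Real.sqrt t) + C) ^ (2 - 1) *
        (4 / 3 * A * Λ * (1 * Real.sqrt t + t * (1 / (2 * Real.sqrt t)))))
        / ((4 / 3 * A * Λ * (t * Real.sqrt t) + C) ^ 2) ^ 2) t :=
    hF.congr_of_eventuallyEq heqδ
  -- γ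
  have hx2 : HasDerivAt (fun x : ℝ => x ^ 2) (2 * t ^ 1) t := by
    simpa using hasDerivAt_pow 2 t
  have hInner : HasDerivAt (fun x => A * (4 / 3 * A * Λ * x ^ 2 + C * Real.sqrt x))
      (A * (4 / 3 * A * Λ * (2 * t ^ 1) + C * (1 / (2 * Real.sqrt t)))) t :=
    (((hx2.const_mul (4 / 3 * A * Λ)).add (hsqrt.const_mul C)).const_mul A)
  have hG : HasDerivAt (fun x => 1 / 2 * Real.log (A * (4 / 3 * A * Λ * x ^ 2 + C * Real.sqrt x)))
      (1 / 2 * ((A * (4 / 3 * A * Λ * (2 * t ^ 1) + C * (1 / (2 * Real.sqrt t))))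
        / (A * (4 / 3 * A * Λ * t ^ 2 + C * Real.sqrt t)))) t :=
    (hInner.log hg.ne').const_mul (1 / 2)
  have heqγ : γ =ᶠ[nhds t]
      (fun x => 1 / 2 * Real.log (A * (4 / 3 * A * Λ * x ^ 2 + C * Real.sqrt x))) := by
    filter_upwards [Ioo_mem_nhds hat htb] with x hx
    exact hγdef x hx
  have hγ' : HasDerivAt γ
      (1 / 2 * ((A * (4 / 3 * A * Λ * (2 * t ^ 1) + C * (1 / (2 * Real.sqrt t))))
        / (A * (4 / 3 * A * Λ * t ^ 2 + C * Real.sqrt t)))) t :=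
    hG.congr_of_eventuallyEq heqγ
  refine ⟨hδpos, hg, ?_, ?_⟩
  · convert hγ' using 1
    rw [hδt, hexp, hgeq]
    exact aux_gamma A Λ C t (Real.sqrt t) _ ht0 hst hst2 hu hA rfl
  · convert hδ' using 1
    rw [hδt, hexp, hgeq]
    exact aux_delta A Λ C t (Real.sqrt t) _ ht0 hst hst2 hu hA rfl
end
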